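/- Fix χ ∈ (1/2, 1) and b > 1, and let q = 1 − b^{1/2−χ} ∈ (0,1). With the truncated kernel κ_b((x,s),(y,t)) = κ((x,s),(y,t))·1_{y≤bx}, the function h(x,s) = u_s/√x, where u = (u_Old, u_Young) is the Perron eigenvector of the matrix M_b = [[c_{OldOld}, c_{OldYoung}·q],[c_{YoungOld}, c_{YoungYoung}·q]], is an eigenfunction of the truncated integral operator with eigenvalue ((1+q)c_{OldOld} + √(((1−q)c_{OldOld})² + 4q·c_{OldYoung}·c_{YoungOld}))/(2χ−1). -/

import Mathlib

open MeasureTheory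

/-- Labels of nodes in the Pólya point tree. -/
inductive Label : Type
  | old : Label
  | young : Label
deriving DecidableEq

open Label

/-- The constants `c_{st}` of the Pólya point tree mean-offspring kernel. -/
noncomputable def cst (m : ℕ) (δ : ℝ) : Label → Label → ℝ
  | old, old => m * (m + δ) / (2 * m + δ)
  | old, young => m * (m + 1 + δ) / (2 * m + δ)
  | young, old => (m - 1) * (m + δ) / (2 * m + δ)
  | young, young => m * (m + δ) / (2 * m + δ)

/-- The Pólya point tree mean-offspring kernel. -/
noncomputable def pptKernel (m : ℕ) (δ χ : ℝ) (x : ℝ) (s : Label) (y : ℝ) (t : Label) : ℝ :=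
  cst m δ s t * ((if y < x ∧ t = old then 1 else 0) + (if x < y ∧ t = young then 1 else 0)) /
    (max x y ^ χ * min x y ^ (1 - χ))

/-!
For fixed `x` the kernel is a power of `y` on `(0, x)`, where the children are old, and on
`(x, bx)`, where they are young. Against `1/√y` the old part integrates to
`c_{s,old} / ((χ - 1/2) √x)`, which needs `χ > 1/2`, and the young part to
`c_{s,young} (1 - b^{1/2-χ}) / ((χ - 1/2) √x)`: the truncation at `bx` is what produces `q`.
Summed against `u`, the eigenvector equation of `M_b` turns `T_{κ_b} h (x, s)` into `r u_s / √x`.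
-/

open Real Set

lemma integral_Ioo_zero_rpow {p : ℝ} (hp : -1 < p) {x : ℝ} (hx : 0 ≤ x) :
    ∫ y in Ioo 0 x, y ^ p = x ^ (p + 1) / (p + 1) := by
  rw [← integral_Ioc_eq_integral_Ioo, ← intervalIntegral.integral_of_le hx,
    integral_rpow (Or.inl hp), zero_rpow (by linarith), sub_zero]

lemma integral_Ioo_rpow {p : ℝ} (hp : p ≠ -1) {x z : ℝ} (hx : 0 < x) (hxz : x ≤ z) :
    ∫ y in Ioo x z, y ^ p = (z ^ (p + 1) - x ^ (p + 1)) / (p + 1) := by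
  rw [← integral_Ioc_eq_integral_Ioo, ← intervalIntegral.integral_of_le hxz,
    integral_rpow (Or.inr ⟨hp, by rw [uIcc_of_le hxz]; exact fun h => hx.not_ge h.1⟩)]

lemma rpow_neg_sub_half {y : ℝ} (hy : 0 < y) (β : ℝ) : y ^ (-β - 1/2) = (y ^ β * √y)⁻¹ := by
  rw [sqrt_eq_rpow, ← rpow_add hy, ← rpow_neg hy.le]
  ring_nf

lemma rpow_neg_mul_rpow_sub_half {x : ℝ} (hx : 0 < x) (a : ℝ) :
    x ^ (-a) * x ^ (a - 1/2) = (√x)⁻¹ := by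
  rw [← rpow_add hx, sqrt_eq_rpow, ← rpow_neg hx.le]
  ring_nf

section pptKernel

variable {m : ℕ} {δ χ x y z b : ℝ} {s : Label}

lemma pptKernel_old_of_lt (hyx : y < x) :
    pptKernel m δ χ x s y old = cst m δ s old / (x ^ χ * y ^ (1 - χ)) := by
  simp [pptKernel, hyx, hyx.not_gt, max_eq_left hyx.le, min_eq_right hyx.le]

lemma pptKernel_old_of_le (hxy : x ≤ y) : pptKernel m δ χ x s y old = 0 := by
  simp [pptKernel, hxy.not_gt]

lemma pptKernel_young_of_lt (hxy : x < y) :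
    pptKernel m δ χ x s y young = cst m δ s young / (y ^ χ * x ^ (1 - χ)) := by
  simp [pptKernel, hxy, hxy.not_gt, max_eq_right hxy.le, min_eq_left hxy.le]

lemma pptKernel_young_of_le (hyx : y ≤ x) : pptKernel m δ χ x s y young = 0 := by
  simp [pptKernel, hyx.not_gt]

lemma integral_pptKernel_old_mul_div_sqrt (hχ : 1/2 < χ) (hx : 0 < x) (hxz : x ≤ z) (c : ℝ) :
    ∫ y in Ioo 0 z, pptKernel m δ χ x s y old * (c / √y)
      = cst m δ s old * c / ((χ - 1/2) * √x) := by
  have hEq : EqOn (fun y => pptKernel m δ χ x s y old * (c / √y))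
      ((Ioo 0 x).indicator fun y => cst m δ s old * c * x ^ (-χ) * y ^ (χ - 3/2)) (Ioo 0 z) := by
    rintro y ⟨hy, -⟩
    dsimp only
    rcases lt_or_ge y x with hyx | hxy
    · rw [indicator_of_mem (mem_Ioo.mpr ⟨hy, hyx⟩), pptKernel_old_of_lt hyx,
        show χ - 3/2 = -(1 - χ) - 1/2 by ring, rpow_neg_sub_half hy, rpow_neg hx.le]
      ring
    · rw [indicator_of_notMem fun h => h.2.not_ge hxy, pptKernel_old_of_le hxy, zero_mul]
  rw [setIntegral_congr_fun measurableSet_Ioo hEq, setIntegral_indicator measurableSet_Ioo,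
    inter_eq_right.mpr (Ioo_subset_Ioo_right hxz), integral_const_mul,
    integral_Ioo_zero_rpow (by linarith) hx.le, show χ - 3/2 + 1 = χ - 1/2 by ring, ← div_div]
  linear_combination (cst m δ s old * c / (χ - 1/2)) * rpow_neg_mul_rpow_sub_half hx χ

lemma integral_pptKernel_young_mul_div_sqrt (hχ : χ ≠ 1/2) (hx : 0 < x) (hb : 1 ≤ b) (c : ℝ) :
    ∫ y in Ioo 0 (b * x), pptKernel m δ χ x s y young * (c / √y)
      = cst m δ s young * (1 - b ^ (1/2 - χ)) * c / ((χ - 1/2) * √x) := by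
  have hEq : EqOn (fun y => pptKernel m δ χ x s y young * (c / √y))
      ((Ioo x (b * x)).indicator fun y => cst m δ s young * c * x ^ (-(1 - χ)) * y ^ (-χ - 1/2))
      (Ioo 0 (b * x)) := by
    rintro y ⟨hy, hyb⟩
    dsimp only
    rcases lt_or_ge x y with hxy | hyx
    · rw [indicator_of_mem (mem_Ioo.mpr ⟨hxy, hyb⟩), pptKernel_young_of_lt hxy,
        rpow_neg_sub_half hy, rpow_neg hx.le]
      ring
    · rw [indicator_of_notMem fun h => h.1.not_ge hyx, pptKernel_young_of_le hyx, zero_mul]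
  have hx_sqrt : x ^ (-(1 - χ)) * x ^ (1/2 - χ) = (√x)⁻¹ := by
    simpa only [show (1 - χ) - 1/2 = 1/2 - χ by ring] using rpow_neg_mul_rpow_sub_half hx (1 - χ)
  rw [setIntegral_congr_fun measurableSet_Ioo hEq, setIntegral_indicator measurableSet_Ioo,
    inter_eq_right.mpr (Ioo_subset_Ioo_left hx.le), integral_const_mul,
    integral_Ioo_rpow (by contrapose! hχ; linarith) hx (le_mul_of_one_le_left hx.le hb),
    show -χ - 1/2 + 1 = 1/2 - χ by ring, mul_rpow (by linarith) hx.le]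
  have hquot : (b ^ (1/2 - χ) * x ^ (1/2 - χ) - x ^ (1/2 - χ)) / (1/2 - χ)
      = (1 - b ^ (1/2 - χ)) * x ^ (1/2 - χ) / (χ - 1/2) := by
    rw [div_eq_div_iff (sub_ne_zero.mpr hχ.symm) (sub_ne_zero.mpr hχ)]
    ring
  rw [hquot, ← div_div]
  linear_combination (cst m δ s young * (1 - b ^ (1/2 - χ)) * c / (χ - 1/2)) * hx_sqrt

end pptKernel

theorem truncated_ppt_operator_eigenfunction_general (m : ℕ) (δ : ℝ) (hδ : 0 < δ)
    (χ : ℝ) (hχ : χ = ((m:ℝ) + δ) / (2 * m + δ)) (b : ℝ) (hb : 1 < b)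
    (q : ℝ) (hq : q = 1 - b ^ (1/2 - χ))
    (r : ℝ)
    (u : Label → ℝ)
    (heig : ∀ s, cst m δ s old * u old + cst m δ s young * q * u young
        = (2 * χ - 1) * r / 2 * u s) :
    ∀ x : ℝ, 0 < x → ∀ s : Label,
      (∫ y in Set.Ioo (0:ℝ) (b * x), pptKernel m δ χ x s y old * (u old / Real.sqrt y)) +
        (∫ y in Set.Ioo (0:ℝ) (b * x), pptKernel m δ χ x s y young * (u young / Real.sqrt y))
      = r * (u s / Real.sqrt x) := by
  intro x hx s
  have hχ_gt : 1/2 < χ := by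
    rw [hχ, lt_div_iff₀ (by positivity)]
    linarith
  rw [integral_pptKernel_old_mul_div_sqrt hχ_gt hx (le_mul_of_one_le_left hx.le hb.le),
    integral_pptKernel_young_mul_div_sqrt hχ_gt.ne' hx hb.le, ← hq, ← add_div, heig s]
  have hχ' : 2 * χ - 1 ≠ 0 := by linarith
  field_simp

/-- With `χ = (m+δ)/(2m+δ) ∈ (1/2,1)`, `b > 1`, `q = 1-b^{1/2-χ}`, and `u` the Perron
eigenvector of `M_b = [[c_oo, c_oy q],[c_yo, c_yy q]]` (with eigenvalue
`λ_{M_b} = ((1+q)c_oo + √(((1-q)c_oo)² + 4q c_oy c_yo))/2`), the function `h(x,s) = u_s/√x`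
is an eigenfunction of the truncated operator `(T_{κ_b}f)(x,s) = ∑_t ∫₀^{bx} κ f dy` with
eigenvalue `r = ((1+q)c_oo + √(((1-q)c_oo)² + 4q c_oy c_yo))/(2χ-1)`. -/
theorem truncated_ppt_operator_eigenfunction (m : ℕ) (hm : 1 ≤ m) (δ : ℝ) (hδ : 0 < δ)
    (χ : ℝ) (hχ : χ = ((m:ℝ) + δ) / (2 * m + δ)) (b : ℝ) (hb : 1 < b)
    (q : ℝ) (hq : q = 1 - b ^ (1/2 - χ))
    (r : ℝ)
    (hr : r = ((1 + q) * cst m δ old old +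
        Real.sqrt (((1 - q) * cst m δ old old) ^ 2 +
          4 * q * cst m δ old young * cst m δ young old)) / (2 * χ - 1))
    (u : Label → ℝ) (hu : ∀ s, 0 < u s)
    (heig : ∀ s, cst m δ s old * u old + cst m δ s young * q * u young
        = (2 * χ - 1) * r / 2 * u s) :
    ∀ x : ℝ, 0 < x → ∀ s : Label,
      (∫ y in Set.Ioo (0:ℝ) (b * x), pptKernel m δ χ x s y old * (u old / Real.sqrt y)) +
        (∫ y in Set.Ioo (0:ℝ) (b * x), pptKernel m δ χ x s y young * (u young / Real.sqrt y))
      = r * (u s / Real.sqrt x) :=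
  truncated_ppt_operator_eigenfunction_general m δ hδ χ hχ b hb q hq r u heig
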